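/- Fix the caterpillar chain R with rk_R(1) = rk_R(2) = 1 and rk_R(i) = i−1 for 3 ≤ i ≤ n, and for a caterpillar chain X set f(X) = p_X − m_X, where p_X is the number of ordered pairs (i,j) with rk_X(i) < rk_X(j) and rk_R(i) > rk_R(j), and m_X is the number of elements i such that rk_X(i) < min(rk_X(1), rk_X(2)) and for every l ≠ i with rk_X(l) ≤ rk_X(i) one has rk_R(l) > rk_R(i). Then for any two adjacent caterpillar chains T and T', f(T') ≥ f(T) − 1. -/

import Mathlib

/-!
In a caterpillar chain every rank `j ≥ 2` belongs to exactly one leaf and rank `1` to the two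
leaves of the cherry. If `T` and `T'` differ only in the partition at step `k`, then the ranks of
`T'` arise from those of `T` by exchanging the ranks `k` and `k + 1` of two leaves `u` and `v`.
Both `p_X` (inversions between `rk_X` and `rk_R`) and `m_X` (leaves that are strictly
`rk_R`-smaller than every other leaf of no larger `rk_X`, other than the leaves `1, 2`) can then
only change on the leaves of rank `k` or `k + 1`: the pair `u, v`, joined by the cherry partner
`w` of `u` when `k = 1`. A case check on the `rk_R`-order of these two or three leaves shows that
`p - m` drops by at most one; when `k = 1` it uses that `u` and `w` have equal `rk_R` only if both
lie in `{1, 2}`.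
-/

/-- A maximal chain in the partition lattice of `Fin n`: a sequence
`P 0 < P 1 < … < P (n-1)` of partitions (modeled as setoids, ordered by refinement),
starting at the discrete partition `⊥`, ending at the trivial partition `⊤`,
each step being a covering step (merging exactly two blocks).
We index by `ℕ` and require the chain to be constantly `⊤` from index `n-1` on. -/
structure RChain (n : ℕ) where
  P : ℕ → Setoid (Fin n)
  first : P 0 = ⊥
  last : ∀ i, n - 1 ≤ i → P i = ⊤
  step : ∀ i, i < n - 1 → P i ⋖ P (i + 1)

/-- The RNNI graph on `n` leaves: vertices are maximal chains in the partition
lattice of `Fin n`, two chains being adjacent iff they differ in exactly one partition. -/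
def RNNI (n : ℕ) : SimpleGraph (RChain n) where
  Adj T R := ∃! i : ℕ, T.P i ≠ R.P i
  symm := by
    refine ⟨?_⟩
    rintro T R ⟨i, hi, hu⟩
    exact ⟨i, hi.symm, fun j hj => hu j hj.symm⟩
  loopless := by
    refine ⟨?_⟩
    rintro T ⟨i, hi, -⟩
    exact hi rfl

/-- `C` is a cluster of the chain `T` if it is a block (equivalence class)
of some partition of the chain. -/
def IsCluster {n : ℕ} (T : RChain n) (C : Set (Fin n)) : Prop :=
  ∃ i, C ∈ (T.P i).classes

/-- A chain is a caterpillar chain if any two of its non-singleton clusters are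
comparable under inclusion. -/
def IsCaterpillar {n : ℕ} (T : RChain n) : Prop :=
  ∀ C D : Set (Fin n), IsCluster T C → IsCluster T D →
    ¬ C.Subsingleton → ¬ D.Subsingleton → (C ⊆ D ∨ D ⊆ C)

/-- For a caterpillar chain `T`, `rk T a` is the least index `i` such that the
block of `a` in `P i` is not a singleton (necessarily `i ≥ 1`). -/
noncomputable def rk {n : ℕ} (T : RChain n) (a : Fin n) : ℕ :=
  sInf {i | ∃ b, b ≠ a ∧ (T.P i).r a b}

/-- A DCT vertex: a maximal chain on the ground set `Fin (m+2)` (representing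
`{1, …, m+2}`, with `a_i ↦ i - 1`) having the set `{1, …, n}` and each of the sets
`B_k = {n+1, …, n+1+k}`, `k = 1, …, m+1-n`, as clusters. -/
def IsDCT (n m : ℕ) (X : RChain (m + 2)) : Prop :=
  IsCluster X {x | x.val < n} ∧
  ∀ k, 1 ≤ k → k ≤ m + 1 - n → IsCluster X {x | n ≤ x.val ∧ x.val ≤ n + k}

/-- The subgraph of the RNNI graph induced on the DCT vertices. -/
def DCTGraph (n m : ℕ) : SimpleGraph {Z : RChain (m + 2) // IsDCT n m Z} :=
  SimpleGraph.comap Subtype.val (RNNI (m + 2))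

/-- A caterpillar DCT vertex: a DCT vertex whose non-singleton clusters contained in
`{1, …, n}` are pairwise comparable under inclusion. -/
def IsCatDCT (n m : ℕ) (X : RChain (m + 2)) : Prop :=
  IsDCT n m X ∧
  ∀ C D : Set (Fin (m + 2)), IsCluster X C → IsCluster X D →
    C ⊆ {x | x.val < n} → D ⊆ {x | x.val < n} →
    ¬ C.Subsingleton → ¬ D.Subsingleton → (C ⊆ D ∨ D ⊆ C)

/-- `f(X) = p_X - m_X` for a caterpillar chain `X`, relative to the fixed caterpillar
chain `R` with `rk_R(1) = rk_R(2) = 1` and `rk_R(i) = i - 1` for `3 ≤ i ≤ n`. -/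
noncomputable def fval {n : ℕ} (hn : 2 ≤ n) (R X : RChain n) : ℕ :=
  Nat.card {q : Fin n × Fin n // rk X q.1 < rk X q.2 ∧ rk R q.2 < rk R q.1} -
  Nat.card {i : Fin n //
    rk X i < min (rk X ⟨0, by omega⟩) (rk X ⟨1, by omega⟩) ∧
    ∀ l : Fin n, l ≠ i → rk X l ≤ rk X i → rk R i < rk R l}

def Setoid.mergeClasses {α : Type*} (Q : Setoid α) (a b : α) : Setoid α where
  r x y := Q.r x y ∨ (Q.r x a ∧ Q.r y b) ∨ (Q.r x b ∧ Q.r y a)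
  iseqv := by
    refine ⟨fun x => Or.inl (Q.refl' x), ?_, ?_⟩
    · rintro x y (h | ⟨h1, h2⟩ | ⟨h1, h2⟩)
      exacts [Or.inl (Q.symm' h), Or.inr (Or.inr ⟨h2, h1⟩), Or.inr (Or.inl ⟨h2, h1⟩)]
    · rintro x y z (h | ⟨h1, h2⟩ | ⟨h1, h2⟩) (g | ⟨g1, g2⟩ | ⟨g1, g2⟩)
      exacts [Or.inl (Q.trans' h g), Or.inr (Or.inl ⟨Q.trans' h g1, g2⟩),
        Or.inr (Or.inr ⟨Q.trans' h g1, g2⟩), Or.inr (Or.inl ⟨h1, Q.trans' (Q.symm' g) h2⟩),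
        Or.inr (Or.inl ⟨h1, g2⟩), Or.inl (Q.trans' h1 (Q.symm' g2)),
        Or.inr (Or.inr ⟨h1, Q.trans' (Q.symm' g) h2⟩), Or.inl (Q.trans' h1 (Q.symm' g2)),
        Or.inr (Or.inr ⟨h1, g2⟩)]

theorem CovBy.eq_mergeClasses {α : Type*} {Q Q' : Setoid α} (h : Q ⋖ Q') {a b : α}
    (hab : Q'.r a b) (hnab : ¬ Q.r a b) : Q' = Q.mergeClasses a b := by
  have hlt : Q < Q.mergeClasses a b :=
    lt_of_le_not_ge (fun _ _ h => Or.inl h)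
      fun hle => hnab (hle (Or.inr (Or.inl ⟨Q.refl' a, Q.refl' b⟩)))
  have hle : Q.mergeClasses a b ≤ Q' := by
    have hQ : Q ≤ Q' := h.le
    rintro x y (hxy | ⟨hxa, hyb⟩ | ⟨hxb, hya⟩)
    · exact hQ hxy
    · exact Q'.trans' (Q'.trans' (hQ hxa) hab) (Q'.symm' (hQ hyb))
    · exact Q'.trans' (Q'.trans' (hQ hxb) (Q'.symm' hab)) (Q'.symm' (hQ hya))
  exact ((h.eq_or_eq hlt.le hle).resolve_left hlt.ne').symm

namespace RChain

variable {n : ℕ} (T : RChain n)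

theorem monotone_P : Monotone T.P := by
  refine monotone_nat_of_le_succ fun i => ?_
  by_cases h : i < n - 1
  · exact (T.step i h).le
  · rw [T.last i (by omega), T.last (i + 1) (by omega)]

variable (hn : 2 ≤ n)
include hn

theorem rk_le_iff {a : Fin n} {i : ℕ} : rk T a ≤ i ↔ ∃ b, b ≠ a ∧ (T.P i).r a b := by
  have hmem : n - 1 ∈ {i | ∃ b, b ≠ a ∧ (T.P i).r a b} := by
    obtain ⟨b, hb⟩ := Fintype.exists_ne_of_one_lt_card (by rw [Fintype.card_fin]; omega) a
    exact ⟨b, hb, by rw [T.last (n - 1) le_rfl]; trivial⟩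
  refine ⟨fun h => ?_, fun h => Nat.sInf_le h⟩
  obtain ⟨b, hb, hab⟩ := Nat.sInf_mem ⟨_, hmem⟩
  exact ⟨b, hb, T.monotone_P h hab⟩

theorem one_le_rk (a : Fin n) : 1 ≤ rk T a := by
  by_contra h
  obtain ⟨b, hb, hab⟩ := (T.rk_le_iff hn (a := a) (i := 0)).1 (by omega)
  rw [T.first] at hab
  exact hb hab.symm

theorem rk_le_sub_one (a : Fin n) : rk T a ≤ n - 1 := by
  obtain ⟨b, hb⟩ := Fintype.exists_ne_of_one_lt_card (by rw [Fintype.card_fin]; omega) a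
  exact (T.rk_le_iff hn).2 ⟨b, hb, by rw [T.last (n - 1) le_rfl]; trivial⟩

theorem exists_ne_rk_eq_one {a : Fin n} (ha : rk T a = 1) : ∃ b, b ≠ a ∧ rk T b = 1 := by
  obtain ⟨b, hb, hab⟩ := (T.rk_le_iff hn).1 ha.le
  have : rk T b ≤ 1 := (T.rk_le_iff hn).2 ⟨a, hb.symm, (T.P 1).symm' hab⟩
  exact ⟨b, hb, le_antisymm this (T.one_le_rk hn b)⟩

/-- The leaves of rank `j` are singletons of `P (j - 1)` merged at step `j`. -/
theorem exists_pair_of_rk_eq (j : ℕ) : ∃ x y, ∀ a, rk T a = j → a = x ∨ a = y := by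
  by_cases hj : 1 ≤ j ∧ j ≤ n - 1
  swap
  · refine ⟨⟨0, by omega⟩, ⟨0, by omega⟩, fun a ha => absurd ha ?_⟩
    have := T.one_le_rk hn a
    have := T.rk_le_sub_one hn a
    omega
  have hstep : T.P (j - 1) ⋖ T.P j := by
    simpa [Nat.sub_add_cancel hj.1] using T.step (j - 1) (by omega)
  obtain ⟨x, y, hxy, hnxy⟩ : ∃ x y, (T.P j).r x y ∧ ¬ (T.P (j - 1)).r x y := by
    by_contra! h
    exact hstep.lt.not_ge fun x y => h x y
  refine ⟨x, y, fun a ha => ?_⟩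
  have hsingle : ∀ z, (T.P (j - 1)).r a z → z = a := fun z haz => by
    by_contra hz
    have := (T.rk_le_iff hn).2 ⟨z, hz, haz⟩
    omega
  obtain ⟨b, hb, hab⟩ := (T.rk_le_iff hn).1 ha.le
  rw [hstep.eq_mergeClasses hxy hnxy] at hab
  rcases hab with h | ⟨h, -⟩ | ⟨h, -⟩
  · exact absurd (hsingle b h) hb
  · exact Or.inl (hsingle x h).symm
  · exact Or.inr (hsingle y h).symm

theorem eq_or_eq_of_rk_eq {a b c : Fin n} (hab : a ≠ b) (ha : rk T a = rk T c)
    (hb : rk T b = rk T c) : c = a ∨ c = b := by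
  obtain ⟨x, y, hxy⟩ := T.exists_pair_of_rk_eq hn (rk T c)
  rcases hxy a ha with rfl | rfl <;> rcases hxy b hb with rfl | rfl <;>
    rcases hxy c rfl with rfl | rfl <;> simp_all

end RChain

namespace IsCaterpillar

variable {n : ℕ} {T : RChain n} (hT : IsCaterpillar T) (hn : 2 ≤ n)
include hT hn

theorem rel_iff {a b : Fin n} (hab : a ≠ b) (i : ℕ) :
    (T.P i).r a b ↔ rk T a ≤ i ∧ rk T b ≤ i := by
  refine ⟨fun h => ⟨(T.rk_le_iff hn).2 ⟨b, hab.symm, h⟩,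
    (T.rk_le_iff hn).2 ⟨a, hab, (T.P i).symm' h⟩⟩, fun ⟨ha, hb⟩ => ?_⟩
  obtain ⟨a', ha', haa'⟩ := (T.rk_le_iff hn).1 ha
  obtain ⟨b', hb', hbb'⟩ := (T.rk_le_iff hn).1 hb
  have hclass : ∀ {c c'}, c' ≠ c → (T.P i).r c c' →
      IsCluster T {x | (T.P i).r x c} ∧ ¬ ({x | (T.P i).r x c} : Set (Fin n)).Subsingleton :=
    fun hne hcc' => ⟨⟨i, Setoid.mem_classes _ _⟩,
      fun hs => hne (hs ((T.P i).symm' hcc') ((T.P i).refl' _))⟩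
  obtain ⟨hCa, hCa'⟩ := hclass ha' haa'
  obtain ⟨hCb, hCb'⟩ := hclass hb' hbb'
  rcases hT _ _ hCa hCb hCa' hCb' with h | h
  · exact h ((T.P i).refl' a)
  · exact (T.P i).symm' (h ((T.P i).refl' b))

theorem exists_rk_eq {j : ℕ} (h1 : 1 ≤ j) (hj : j ≤ n - 1) : ∃ a, rk T a = j := by
  have hstep : T.P (j - 1) < T.P j := by
    simpa [Nat.sub_add_cancel h1] using (T.step (j - 1) (by omega)).lt
  obtain ⟨x, y, hxy, hnxy⟩ : ∃ x y, (T.P j).r x y ∧ ¬ (T.P (j - 1)).r x y := by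
    by_contra! h
    exact hstep.not_ge fun x y => h x y
  have hne : x ≠ y := by rintro rfl; exact hnxy ((T.P (j - 1)).refl' x)
  rw [hT.rel_iff hn hne] at hxy hnxy
  by_cases hx : rk T x ≤ j - 1
  · exact ⟨y, by omega⟩
  · exact ⟨x, by omega⟩

theorem eq_of_rk_eq {a b : Fin n} (ha : 2 ≤ rk T a) (hab : rk T a = rk T b) : a = b := by
  by_contra hne
  set j := rk T a
  have hstep : T.P (j - 1) ⋖ T.P j := by
    simpa [Nat.sub_add_cancel (by omega : 1 ≤ j)] using
      T.step (j - 1) (by have := T.rk_le_sub_one hn a; omega)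
  obtain ⟨c, hc⟩ := hT.exists_rk_eq hn le_rfl (by omega : 1 ≤ n - 1)
  have hca : c ≠ a := by rintro rfl; omega
  have hcb : c ≠ b := by rintro rfl; omega
  have hlow : ∀ {d}, c ≠ d → (T.P (j - 1)).r c d → rk T d ≤ j - 1 := fun hcd h =>
    ((hT.rel_iff hn hcd _).1 h).2
  have hca_rel := (hT.rel_iff hn hca j).2 ⟨by omega, le_rfl⟩
  rw [hstep.eq_mergeClasses ((hT.rel_iff hn hne j).2 ⟨le_rfl, hab.ge⟩)
    fun h => by have := ((hT.rel_iff hn hne _).1 h).1; omega] at hca_rel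
  rcases hca_rel with h | ⟨h, -⟩ | ⟨h, -⟩
  · have := hlow hca h; omega
  · have := hlow hca h; omega
  · have := hlow hcb h; omega

end IsCaterpillar

structure IsAdjSwap {α : Type*} (r r' : α → ℕ) (u v : α) (k : ℕ) : Prop where
  left : r u = k
  right : r v = k + 1
  left' : r' u = k + 1
  right' : r' v = k
  eq_of_ne : ∀ c, c ≠ u → c ≠ v → r' c = r c

theorem eq_or_swap_of_forall_le_iff {x y i : ℕ} (h : ∀ j, j ≠ i → (x ≤ j ↔ y ≤ j)) :
    x = y ∨ (x = i ∧ y = i + 1) ∨ (x = i + 1 ∧ y = i) := by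
  have := h x; have := h y; have := h (x - 1); have := h (y - 1)
  omega

theorem exists_isAdjSwap_of_adj {n : ℕ} (hn : 2 ≤ n) {T T' : RChain n} (hT : IsCaterpillar T)
    (hT' : IsCaterpillar T') (hadj : (RNNI n).Adj T T') :
    ∃ u v k, IsAdjSwap (rk T) (rk T') u v k := by
  obtain ⟨i, hne, hi⟩ := hadj
  have hagree : ∀ j, j ≠ i → T.P j = T'.P j := fun j hj => by_contra fun h => hj (hi j h)
  have hi0 : i ≠ 0 := by rintro rfl; exact hne (T.first.trans T'.first.symm)
  have hin : i < n - 1 := by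
    by_contra h
    exact hne ((T.last i (by omega)).trans (T'.last i (by omega)).symm)
  have hrk : ∀ a, rk T a = rk T' a ∨ (rk T a = i ∧ rk T' a = i + 1) ∨
      (rk T a = i + 1 ∧ rk T' a = i) := fun a =>
    eq_or_swap_of_forall_le_iff fun j hj => by rw [T.rk_le_iff hn, T'.rk_le_iff hn, hagree j hj]
  obtain ⟨a, ha⟩ : ∃ a, rk T a ≠ rk T' a := by
    by_contra! h
    refine hne (Setoid.ext fun x y => ?_)
    rcases eq_or_ne x y with rfl | hxy
    · exact iff_of_true ((T.P i).refl' x) ((T'.P i).refl' x)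
    · rw [hT.rel_iff hn hxy, hT'.rel_iff hn hxy, h x, h y]
  obtain ⟨v, hv⟩ := hT.exists_rk_eq hn (j := i + 1) (by omega) (by omega)
  obtain ⟨u, hu⟩ := hT'.exists_rk_eq hn (j := i + 1) (by omega) (by omega)
  have hv_uniq : ∀ c, rk T c = i + 1 → c = v := fun c hc =>
    hT.eq_of_rk_eq hn (by omega) (hc.trans hv.symm)
  have hu_uniq : ∀ c, rk T' c = i + 1 → c = u := fun c hc =>
    hT'.eq_of_rk_eq hn (by omega) (hc.trans hu.symm)
  have hv' : rk T' v = i := by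
    rcases hrk v with h | h | h
    · have hvu := hu_uniq v (by omega)
      rcases hrk a with h' | h' | h'
      · exact absurd h' ha
      · rw [hu_uniq a h'.2, ← hvu] at h'; omega
      · rw [hv_uniq a h'.1] at h'; omega
    · omega
    · exact h.2
  have hu' : rk T u = i := by
    rcases hrk u with h | h | h
    · rw [hv_uniq u (by omega)] at hu; omega
    · exact h.1
    · rw [hv_uniq u h.1] at hu; omega
  refine ⟨u, v, i, hu', hv, hu, hv', fun c hcu hcv => ?_⟩
  rcases hrk c with h | h | h
  · exact h.symm
  · exact absurd (hu_uniq c h.2) hcu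
  · exact absurd (hv_uniq c h.1) hcv

section Counting

variable {α : Type*} (s : α → ℕ)

noncomputable def invCount (r : α → ℕ) : ℕ :=
  Nat.card {q : α × α // r q.1 < r q.2 ∧ s q.2 < s q.1}

def IsPrefixMin (r : α → ℕ) (c : α) : Prop := ∀ l, l ≠ c → r l ≤ r c → s c < s l

/-- The count `m_X` of the paper, for `s = rk R`: there the condition
`rk X c < min (rk X 0) (rk X 1)` is equivalent to `1 < s c` (`lt_min_and_isPrefixMin_iff`). -/
noncomputable def prefixMinCount (r : α → ℕ) : ℕ :=
  Nat.card {c // 1 < s c ∧ IsPrefixMin s r c}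

variable {s}

theorem IsPrefixMin.iff_of_le_iff_eq {r : α → ℕ} {c x : α} (hx : x ≠ c)
    (h : ∀ l, l ≠ c → (r l ≤ r c ↔ l = x)) : IsPrefixMin s r c ↔ s c < s x :=
  ⟨fun hc => hc x hx ((h x hx).2 rfl), fun hc l hl hle => (h l hl).1 hle ▸ hc⟩

theorem IsPrefixMin.iff_of_le_iff_eq_or {r₁ r₂ : α → ℕ} {c x : α} (hx : x ≠ c)
    (h : ∀ l, l ≠ c → (r₂ l ≤ r₂ c ↔ l = x ∨ r₁ l ≤ r₁ c)) :
    IsPrefixMin s r₂ c ↔ IsPrefixMin s r₁ c ∧ s c < s x := by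
  refine ⟨fun hc => ⟨fun l hl hle => hc l hl ((h l hl).2 (Or.inr hle)),
    hc x hx ((h x hx).2 (Or.inl rfl))⟩, fun ⟨hc, hcx⟩ l hl hle => ?_⟩
  rcases (h l hl).1 hle with rfl | hle
  exacts [hcx, hc l hl hle]

theorem card_add_card_filter_eq {β : Type*} [Fintype β] (E : Finset β) {P Q : β → Prop}
    [DecidablePred P] [DecidablePred Q] (h : ∀ x ∉ E, P x ↔ Q x) :
    Nat.card {x // P x} + (E.filter Q).card = Nat.card {x // Q x} + (E.filter P).card := by
  classical
  simp only [Nat.card_eq_fintype_card, Fintype.card_subtype, Finset.card_filter]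
  rw [← Finset.sum_add_sum_compl E fun x => if P x then 1 else 0,
    ← Finset.sum_add_sum_compl E fun x => if Q x then 1 else 0,
    Finset.sum_congr rfl fun x hx => if_congr (h x (Finset.mem_compl.1 hx)) rfl rfl]
  ring

namespace IsAdjSwap

variable {r r' : α → ℕ} {u v : α} {k : ℕ} (h : IsAdjSwap r r' u v k)
include h

theorem ne : u ≠ v := fun huv => by have := h.left; have := h.right; subst huv; omega

theorem le_iff_le {c : α} (hc : r c ≠ k) (hc' : r c ≠ k + 1) (d : α) :
    (r d ≤ r c ↔ r' d ≤ r' c) ∧ (r c ≤ r d ↔ r' c ≤ r' d) := by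
  have hrc : r' c = r c := h.eq_of_ne c (by rintro rfl; exact hc h.left)
    (by rintro rfl; exact hc' h.right)
  rw [hrc]
  by_cases hdu : d = u
  · subst hdu; rw [h.left, h.left']; omega
  by_cases hdv : d = v
  · subst hdv; rw [h.right, h.right']; omega
  rw [h.eq_of_ne d hdu hdv]
  exact ⟨Iff.rfl, Iff.rfl⟩

theorem isPrefixMin_iff {c : α} (hc : r c ≠ k) (hc' : r c ≠ k + 1) :
    IsPrefixMin s r' c ↔ IsPrefixMin s r c :=
  forall_congr' fun l => by rw [(h.le_iff_le hc hc' l).1]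

theorem isPrefixMin_left_iff (hv : ∀ c, r c = k + 1 → c = v) :
    IsPrefixMin s r' u ↔ IsPrefixMin s r u ∧ s u < s v := by
  refine IsPrefixMin.iff_of_le_iff_eq_or h.ne.symm fun l hlu => ?_
  by_cases hlv : l = v
  · subst hlv; simp only [h.left, h.left', h.right', true_or, iff_true]; omega
  rw [h.eq_of_ne l hlu hlv, h.left, h.left']
  have := mt (hv l) hlv
  simp only [hlv, false_or]
  omega

theorem isPrefixMin_right_iff (hv : ∀ c, r c = k + 1 → c = v) :
    IsPrefixMin s r v ↔ IsPrefixMin s r' v ∧ s v < s u := by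
  refine IsPrefixMin.iff_of_le_iff_eq_or h.ne fun l hlv => ?_
  by_cases hlu : l = u
  · subst hlu; simp only [h.left, h.right, true_or, iff_true]; omega
  rw [h.eq_of_ne l hlu hlv, h.right, h.right']
  have := mt (hv l) hlv
  simp only [hlu, false_or]
  omega

variable [Fintype α]

open Classical in
/-- Inversions and prefix minima of `r` and `r'` can only differ at elements of rank `k` or
`k + 1`, so it suffices to compare them on a finite set `E` containing those. -/
theorem invCount_add_prefixMinCount_le_of_local (E : Finset α)
    (hE : ∀ c ∉ E, r c ≠ k ∧ r c ≠ k + 1)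
    (hloc : ((E ×ˢ E).filter fun q => r q.1 < r q.2 ∧ s q.2 < s q.1).card +
        (E.filter fun c => 1 < s c ∧ IsPrefixMin s r' c).card ≤
      ((E ×ˢ E).filter fun q => r' q.1 < r' q.2 ∧ s q.2 < s q.1).card +
        (E.filter fun c => 1 < s c ∧ IsPrefixMin s r c).card + 1) :
    invCount s r + prefixMinCount s r' ≤ invCount s r' + prefixMinCount s r + 1 := by
  classical
  have hinv := card_add_card_filter_eq (E ×ˢ E)
    (P := fun q => r q.1 < r q.2 ∧ s q.2 < s q.1)
    (Q := fun q => r' q.1 < r' q.2 ∧ s q.2 < s q.1)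
    fun q hq => by
      rw [Finset.mem_product, not_and_or] at hq
      rcases hq with hq | hq
      · obtain ⟨h1, h2⟩ := hE _ hq
        simp only [lt_iff_not_ge (a := r q.1), lt_iff_not_ge (a := r' q.1),
          (h.le_iff_le h1 h2 q.2).1]
      · obtain ⟨h1, h2⟩ := hE _ hq
        simp only [lt_iff_not_ge (a := r q.1), lt_iff_not_ge (a := r' q.1),
          (h.le_iff_le h1 h2 q.1).2]
  have hpm := card_add_card_filter_eq E
    (P := fun c => 1 < s c ∧ IsPrefixMin s r' c) (Q := fun c => 1 < s c ∧ IsPrefixMin s r c)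
    fun c hc => by rw [h.isPrefixMin_iff (hE c hc).1 (hE c hc).2]
  beta_reduce at hinv hpm
  unfold invCount prefixMinCount
  omega

variable [DecidableEq α] (hv : ∀ c, r c = k + 1 → c = v)
include hv

theorem invCount_add_prefixMinCount_le_of_unique (hu : ∀ c, r c = k → c = u) :
    invCount s r + prefixMinCount s r' ≤ invCount s r' + prefixMinCount s r + 1 := by
  classical
  refine h.invCount_add_prefixMinCount_le_of_local {u, v} (fun c hc => ?_) ?_
  · simp only [Finset.mem_insert, Finset.mem_singleton, not_or] at hc
    exact ⟨mt (hu c) hc.1, mt (hv c) hc.2⟩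
  · simp only [Finset.card_filter, Finset.sum_product, Finset.sum_pair h.ne, h.left, h.right,
      h.left', h.right', h.isPrefixMin_left_iff hv, h.isPrefixMin_right_iff hv,
      lt_self_iff_false, add_lt_iff_neg_left, not_lt_zero, lt_add_one, false_and, true_and,
      if_false, zero_add, add_zero]
    generalize IsPrefixMin s r u = p, IsPrefixMin s r' v = q
    by_cases hp : p <;> by_cases hq : q <;>
      simp only [hp, hq, true_and, false_and, and_true, and_false] <;> split_ifs <;> omega

theorem invCount_add_prefixMinCount_le_of_pair {w : α} (hwu : w ≠ u) (hw : r w = k)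
    (hlow : ∀ c, r c ≤ k → c = u ∨ c = w) (hs_pos : ∀ a, 1 ≤ s a)
    (hs : s w = s u → s u ≤ 1) :
    invCount s r + prefixMinCount s r' ≤ invCount s r' + prefixMinCount s r + 1 := by
  classical
  have hvw : v ≠ w := by rintro rfl; have := h.right; omega
  have hr'w : r' w = k := (h.eq_of_ne w hwu hvw.symm).trans hw
  have hr'_le : ∀ l, l ≠ u → l ≠ v → r' l ≤ k → l = w := fun l hlu hlv hle =>
    (hlow l (h.eq_of_ne l hlu hlv ▸ hle)).resolve_left hlu
  have pu : IsPrefixMin s r u ↔ s u < s w := IsPrefixMin.iff_of_le_iff_eq hwu fun l hlu =>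
    ⟨fun hle => (hlow l (h.left ▸ hle)).resolve_left hlu, fun hlw => by rw [hlw, hw, h.left]⟩
  have pw : IsPrefixMin s r w ↔ s w < s u := IsPrefixMin.iff_of_le_iff_eq hwu.symm fun l hlw =>
    ⟨fun hle => (hlow l (hw ▸ hle)).resolve_right hlw, fun hlu => by rw [hlu, hw, h.left]⟩
  have pv' : IsPrefixMin s r' v ↔ s v < s w := IsPrefixMin.iff_of_le_iff_eq hvw.symm fun l hlv =>
    ⟨fun hle => hr'_le l (by rintro rfl; have := h.left'; have := h.right'; omega) hlv
      (h.right' ▸ hle), fun hlw => by rw [hlw, hr'w, h.right']⟩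
  have pw' : IsPrefixMin s r' w ↔ s w < s v := IsPrefixMin.iff_of_le_iff_eq hvw fun l hlw =>
    ⟨fun hle => by_contra fun hlv => hlw (hr'_le l
      (by rintro rfl; have := h.left'; omega) hlv (hr'w ▸ hle)),
      fun hlv => by rw [hlv, hr'w, h.right']⟩
  refine h.invCount_add_prefixMinCount_le_of_local {u, v, w} (fun c hc => ?_) ?_
  · simp only [Finset.mem_insert, Finset.mem_singleton, not_or] at hc
    exact ⟨fun hc' => (hlow c hc'.le).elim hc.1 hc.2.2, mt (hv c) hc.2.1⟩
  · have hu₁ := hs_pos u; have hv₁ := hs_pos v; have hw₁ := hs_pos w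
    simp only [Finset.card_filter, Finset.sum_product,
      Finset.sum_insert (show u ∉ ({v, w} : Finset α) by simp [h.ne, hwu.symm]),
      Finset.sum_pair hvw, h.left, h.right, hw, h.left', h.right', hr'w,
      h.isPrefixMin_left_iff hv, h.isPrefixMin_right_iff hv, pu, pw, pv', pw',
      lt_self_iff_false, add_lt_iff_neg_left, not_lt_zero, lt_add_one, false_and, true_and,
      if_false, zero_add, add_zero]
    clear * - hu₁ hv₁ hw₁ hs
    split_ifs <;> omega

end IsAdjSwap

end Counting

theorem IsCaterpillar.invCount_add_prefixMinCount_le {n : ℕ} {T : RChain n}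
    (hT : IsCaterpillar T) (hn : 2 ≤ n) {r' : Fin n → ℕ} {u v : Fin n} {k : ℕ}
    (hsw : IsAdjSwap (rk T) r' u v k) {s : Fin n → ℕ} (hs_pos : ∀ a, 1 ≤ s a)
    (hs_inj : ∀ a b, a ≠ b → s a = s b → s a ≤ 1) :
    invCount s (rk T) + prefixMinCount s r' ≤ invCount s r' + prefixMinCount s (rk T) + 1 := by
  have hk : 1 ≤ k := hsw.left ▸ T.one_le_rk hn u
  have hv : ∀ c, rk T c = k + 1 → c = v := fun c hc =>
    hT.eq_of_rk_eq hn (by omega) (hc.trans hsw.right.symm)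
  obtain rfl | hk2 := hk.eq_or_lt
  · obtain ⟨w, hwu, hw⟩ := T.exists_ne_rk_eq_one hn hsw.left
    refine hsw.invCount_add_prefixMinCount_le_of_pair hv hwu hw (fun c hc => ?_) hs_pos
      fun h => ?_
    · exact T.eq_or_eq_of_rk_eq hn hwu.symm (by have := T.one_le_rk hn c; rw [hsw.left]; omega)
        (by have := T.one_le_rk hn c; omega)
    · have := hs_inj w u hwu h; omega
  · exact hsw.invCount_add_prefixMinCount_le_of_unique hv fun c hc =>
      hT.eq_of_rk_eq hn (by omega) (hc.trans hsw.left.symm)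

theorem lt_min_and_isPrefixMin_iff {α : Type*} {s r : α → ℕ} {z₀ z₁ c : α}
    (hs : ∀ a, s a ≤ 1 ↔ a = z₀ ∨ a = z₁) :
    (r c < min (r z₀) (r z₁) ∧ IsPrefixMin s r c) ↔ (1 < s c ∧ IsPrefixMin s r c) := by
  refine and_congr_left fun hc => ⟨fun hlt => ?_, fun h1 => ?_⟩
  · by_contra hle
    rcases (hs c).1 (by omega) with rfl | rfl <;> simp at hlt
  · have hz : ∀ z, s z ≤ 1 → r c < r z := fun z hz => by
      by_contra hle
      have := hc z (by rintro rfl; omega) (by omega)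
      omega
    exact lt_min (hz z₀ ((hs z₀).2 (Or.inl rfl))) (hz z₁ ((hs z₁).2 (Or.inr rfl)))

theorem fval_eq {n : ℕ} (hn : 2 ≤ n) (R X : RChain n)
    (hR : ∀ a : Fin n, rk R a ≤ 1 ↔ a.val < 2) :
    fval hn R X = invCount (rk R) (rk X) - prefixMinCount (rk R) (rk X) := by
  unfold fval invCount prefixMinCount
  congr 1
  refine Nat.card_congr (Equiv.subtypeEquivRight fun c => lt_min_and_isPrefixMin_iff fun a => ?_)
  rw [hR, Fin.ext_iff, Fin.ext_iff]
  show a.val < 2 ↔ a.val = 0 ∨ a.val = 1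
  omega

theorem fval_adjacent_general (n : ℕ) (hn : 2 ≤ n) (R : RChain n)
    (hR1 : ∀ a : Fin n, a.val < 2 → rk R a = 1)
    (hR2 : ∀ a : Fin n, 2 ≤ a.val → rk R a = a.val)
    (T T' : RChain n) (hTc : IsCaterpillar T) (hT'c : IsCaterpillar T')
    (hadj : (RNNI n).Adj T T') :
    fval hn R T - 1 ≤ fval hn R T' := by
  have hR : ∀ a : Fin n, rk R a = max a.val 1 := fun a => by
    rcases lt_or_ge a.val 2 with h | h
    · rw [hR1 a h]; omega
    · rw [hR2 a h]; omega
  obtain ⟨u, v, k, hsw⟩ := exists_isAdjSwap_of_adj hn hTc hT'c hadj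
  have key := hTc.invCount_add_prefixMinCount_le hn hsw (s := rk R) (fun a => by rw [hR]; omega)
    fun a b hab h => by
      simp only [hR] at h ⊢
      have := Fin.val_ne_of_ne hab
      omega
  have hR' : ∀ a : Fin n, rk R a ≤ 1 ↔ a.val < 2 := fun a => by rw [hR]; omega
  rw [fval_eq hn R T hR', fval_eq hn R T' hR']
  omega

/-- For any two adjacent caterpillar chains `T` and `T'`, `f(T') ≥ f(T) - 1`. -/
theorem fval_adjacent (n : ℕ) (hn : 2 ≤ n) (R : RChain n) (hRc : IsCaterpillar R)
    (hR1 : ∀ a : Fin n, a.val < 2 → rk R a = 1)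
    (hR2 : ∀ a : Fin n, 2 ≤ a.val → rk R a = a.val)
    (T T' : RChain n) (hTc : IsCaterpillar T) (hT'c : IsCaterpillar T')
    (hadj : (RNNI n).Adj T T') :
    fval hn R T - 1 ≤ fval hn R T' :=
  fval_adjacent_general n hn R hR1 hR2 T T' hTc hT'c hadj
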